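/- If a function x(t) satisfies the Riccati differential equation x'(t) = a(x - α)(x - β) with a ≠ 0, then for every n ≥ 2 the n-th derivative satisfies x^{(n)}(t) = a^n · Σ_{k=0}^{n-1} ⟨n, k⟩ · (x-α)^{k+1} · (x-β)^{n-k}, where ⟨n,k⟩ denotes the Eulerian number. -/

import Mathlib

/-- Eulerian numbers `⟨n, k⟩`: the number of permutations of `{1, ..., n}` with
exactly `k` ascents, via the standard recurrence. -/
def eulerian : ℕ → ℕ → ℕ
  | 0, 0 => 1
  | 0, _ + 1 => 0
  | _ + 1, 0 => 1
  | n + 1, k + 1 => (k + 2) * eulerian n (k + 1) + (n - k) * eulerian n k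

/-!
Put `u = x - α` and `v = x - β`. Both satisfy `u' = v' = a u v`, so differentiating a monomial
gives `(u^i v^j)' = a (i u^i v^(j+1) + j u^(i+1) v^j)`. Applied to
`E n u v = ∑_{k<n} ⟨n,k⟩ u^(k+1) v^(n-k)` (`eulerianSum`), this sends `E n` to `a E (n+1)`:
collecting the coefficient of `u^(k+2) v^(n-k)` reproduces exactly the recurrence of the Eulerian
numbers. Induction from `x' = a E 1` gives `x⁽ⁿ⁾ = aⁿ E n` for all `n ≥ 1`.
-/

open Finset

theorem eulerian_zero_right (n : ℕ) : eulerian n 0 = 1 := by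
  cases n <;> rfl

theorem eulerian_eq_zero_of_le : ∀ {n k : ℕ}, 0 < n → n ≤ k → eulerian n k = 0
  | 1, k + 1, _, _ => by simp [eulerian]
  | n + 2, k + 1, _, h => by
    rw [eulerian, eulerian_eq_zero_of_le (by omega) (by omega), Nat.sub_eq_zero_of_le (by omega)]
    ring

section EulerianSum

variable {R : Type*} [CommRing R]

def eulerianSum (n : ℕ) (u v : R) : R :=
  ∑ k ∈ range n, (eulerian n k : R) * u ^ (k + 1) * v ^ (n - k)

theorem eulerianSum_one (u v : R) : eulerianSum 1 u v = u * v := by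
  simp [eulerianSum, eulerian_zero_right]

theorem eulerianSum_succ (n : ℕ) (u v : R) :
    eulerianSum (n + 2) u v = ∑ k ∈ range (n + 1), (eulerian (n + 1) k : R) *
      ((k + 1 : ℕ) * u ^ (k + 1) * v ^ (n + 1 - k + 1) +
        (n + 1 - k : ℕ) * u ^ (k + 2) * v ^ (n + 1 - k)) := by
  have hrec : ∀ k ∈ range (n + 1),
      (eulerian (n + 2) (k + 1) : R) * u ^ (k + 1 + 1) * v ^ (n + 2 - (k + 1)) =
        (k + 1 + 1 : ℕ) * eulerian (n + 1) (k + 1) * u ^ (k + 1 + 1) * v ^ (n + 2 - (k + 1)) +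
          (n + 1 - k : ℕ) * eulerian (n + 1) k * u ^ (k + 2) * v ^ (n + 1 - k) := by
    intro k _
    rw [eulerian, show n + 2 - (k + 1) = n + 1 - k by omega]
    push_cast
    ring
  calc eulerianSum (n + 2) u v
      = ∑ k ∈ range (n + 2),
          ((k + 1 : ℕ) * eulerian (n + 1) k * u ^ (k + 1) * v ^ (n + 2 - k) : R) +
        ∑ k ∈ range (n + 1),
          ((n + 1 - k : ℕ) * eulerian (n + 1) k * u ^ (k + 2) * v ^ (n + 1 - k) : R) := by
        rw [eulerianSum, sum_range_succ', sum_congr rfl hrec, sum_add_distrib,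
          sum_range_succ' _ (n + 1)]
        simp only [eulerian_zero_right, Nat.sub_zero, Nat.reduceSubDiff]
        push_cast
        ring
    _ = _ := by
        -- the last term of the first sum carries `⟨n + 1, n + 1⟩ = 0`
        rw [sum_range_succ, eulerian_eq_zero_of_le (by omega) le_rfl, Nat.cast_zero, mul_zero,
          zero_mul, zero_mul, add_zero, ← sum_add_distrib]
        refine sum_congr rfl fun k hk ↦ ?_
        rw [show n + 2 - k = n + 1 - k + 1 by grind]
        ring

end EulerianSum

section Riccati

variable {𝕜 𝔸 : Type*} [NontriviallyNormedField 𝕜] [NormedCommRing 𝔸] [NormedAlgebra 𝕜 𝔸]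
  {u v : 𝕜 → 𝔸} {c : 𝔸} {t : 𝕜}

theorem hasDerivAt_pow_of_hasDerivAt_mul (hu : HasDerivAt u (c * u t * v t) t) (i : ℕ) :
    HasDerivAt (fun s ↦ u s ^ i) (c * i * u t ^ i * v t) t := by
  refine (hu.fun_pow i).congr_deriv ?_
  rcases i with _ | i
  · simp
  · rw [Nat.add_sub_cancel, pow_succ]
    ring

theorem hasDerivAt_pow_mul_pow (hu : HasDerivAt u (c * u t * v t) t)
    (hv : HasDerivAt v (c * u t * v t) t) (i j : ℕ) :
    HasDerivAt (fun s ↦ u s ^ i * v s ^ j)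
      (c * (i * u t ^ i * v t ^ (j + 1) + j * u t ^ (i + 1) * v t ^ j)) t := by
  have hv' : HasDerivAt v (c * v t * u t) t := by rwa [mul_right_comm]
  refine ((hasDerivAt_pow_of_hasDerivAt_mul hu i).mul
    (hasDerivAt_pow_of_hasDerivAt_mul hv' j)).congr_deriv ?_
  ring

theorem hasDerivAt_eulerianSum (hu : HasDerivAt u (c * u t * v t) t)
    (hv : HasDerivAt v (c * u t * v t) t) (n : ℕ) :
    HasDerivAt (fun s ↦ eulerianSum (n + 1) (u s) (v s))
      (c * eulerianSum (n + 2) (u t) (v t)) t := by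
  rw [eulerianSum_succ, mul_sum]
  refine HasDerivAt.fun_sum fun k _ ↦ ?_
  simp only [mul_assoc]
  refine ((hasDerivAt_pow_mul_pow hu hv (k + 1) (n + 1 - k)).const_mul
    (eulerian (n + 1) k : 𝔸)).congr_deriv ?_
  ring

theorem iteratedDeriv_succ_eq_eulerianSum {x : 𝕜 → 𝔸} {a α β : 𝔸}
    (hx : ∀ t, HasDerivAt x (a * (x t - α) * (x t - β)) t) (n : ℕ) :
    iteratedDeriv (n + 1) x =
      fun t ↦ a ^ (n + 1) * eulerianSum (n + 1) (x t - α) (x t - β) := by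
  induction n with
  | zero =>
    funext t
    rw [iteratedDeriv_one, (hx t).deriv, eulerianSum_one]
    ring
  | succ n ih =>
    funext t
    rw [iteratedDeriv_succ, ih, pow_succ _ (n + 1), mul_assoc]
    exact ((hasDerivAt_eulerianSum ((hx t).sub_const α) ((hx t).sub_const β) n).const_mul _).deriv

end Riccati

theorem stmt_9_general (a α β : ℂ) (x : ℝ → ℂ)
    (hx : ∀ t : ℝ, HasDerivAt x (a * (x t - α) * (x t - β)) t) :
    ∀ n : ℕ, 2 ≤ n → ∀ t : ℝ,
      iteratedDeriv n x t =
        a ^ n * ∑ k ∈ Finset.range n,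
          (eulerian n k : ℂ) * (x t - α) ^ (k + 1) * (x t - β) ^ (n - k) := by
  intro n hn t
  obtain ⟨m, rfl⟩ := Nat.exists_eq_add_of_le' (Nat.one_le_of_lt hn)
  exact congrFun (iteratedDeriv_succ_eq_eulerianSum hx m) t

theorem stmt_9 (a α β : ℂ) (ha : a ≠ 0) (x : ℝ → ℂ)
    (hx : ∀ t : ℝ, HasDerivAt x (a * (x t - α) * (x t - β)) t) :
    ∀ n : ℕ, 2 ≤ n → ∀ t : ℝ,
      iteratedDeriv n x t =
        a ^ n * ∑ k ∈ Finset.range n,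
          (eulerian n k : ℂ) * (x t - α) ^ (k + 1) * (x t - β) ^ (n - k) :=
  stmt_9_general a α β x hx
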